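/- arXiv:1801.07516 — 5 statements merged into one kernel-verified Lean document; each statement's English description precedes it below -/
import Mathlib

section
/- For a field $K$ (or ring $\mathbb{Q}$), positive integers $a, b$ and scalars $\alpha, \beta, \gamma$, the determinant of the $(a+b)\times(a+b)$ block matrix $\begin{pmatrix}\alpha I_a + \beta J_a & \gamma J \\ \gamma J & \alpha I_b + \beta J_b\end{pmatrix}$ equals $\alpha^{a+b-2}\left(\alpha^2 + (a+b)\alpha\beta + ab\beta^2 - ab\gamma^2\right)$. -/
/-!
Let `U` be the `(a + b) × 2` incidence matrix of the partition of the index set into its two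
parts and `C` the `2 × (a + b)` matrix whose rows are `(β, …, β, γ, …, γ)` and
`(γ, …, γ, β, …, β)`. The block matrix is `α • 1 + U * C`, and since `AB` and `BA` have the same
characteristic polynomial up to a power of `X`, its determinant is `α ^ (a + b - 2)` times the
determinant of the `2 × 2` matrix `α • 1 + C * U = !![α + a β, b γ; a γ, α + b β]`. Being an
identity of polynomials, this needs no invertibility of `α`.
-/

open Matrix

/-- The all-ones matrix. -/
def allOnes {R : Type*} [One R] {m n : Type*} : Matrix m n R :=
  Matrix.of fun _ _ => 1

@[simp]
theorem allOnes_apply {R : Type*} [One R] {m n : Type*} (i : m) (j : n) :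
    (allOnes : Matrix m n R) i j = 1 :=
  rfl

theorem allOnes_mul_allOnes {R : Type*} [NonAssocSemiring R] {l m n : Type*} [Fintype m] :
    (allOnes : Matrix l m R) * (allOnes : Matrix m n R) = (Fintype.card m : R) • allOnes := by
  ext i k
  simp [mul_apply]

namespace Matrix

variable {R : Type*} [CommRing R]

theorem det_smul_one_add_mul_comm_of_le {m n : Type*} [Fintype m] [DecidableEq m] [Fintype n]
    [DecidableEq n] (A : Matrix m n R) (B : Matrix n m R)
    (hle : Fintype.card n ≤ Fintype.card m) (t : R) :
    (t • 1 + A * B).det = t ^ (Fintype.card m - Fintype.card n) * (t • 1 + B * A).det := by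
  have key := congrArg (Polynomial.eval t) (charpoly_mul_comm_of_le (-A) B hle)
  simpa [eval_charpoly, smul_one_eq_diagonal, scalar_apply, sub_eq_add_neg] using key

theorem det_fromBlocks_fin_one (A B C D : Matrix (Fin 1) (Fin 1) R) :
    (fromBlocks A B C D).det = A 0 0 * D 0 0 - B 0 0 * C 0 0 := by
  have h0 : finSumFinEquiv.symm (0 : Fin (1 + 1)) = Sum.inl 0 := rfl
  have h1 : finSumFinEquiv.symm (1 : Fin (1 + 1)) = Sum.inr 0 := rfl
  rw [← det_reindex_self finSumFinEquiv, det_fin_two]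
  simp [h0, h1]

end Matrix

theorem fromBlocks_allOnes_eq_smul_one_add_mul {R : Type*} [CommRing R] {m n : Type*}
    [Fintype m] [Fintype n] [DecidableEq m] [DecidableEq n] (α β γ : R) :
    fromBlocks (α • (1 : Matrix m m R) + β • allOnes) (γ • allOnes)
        (γ • allOnes) (α • (1 : Matrix n n R) + β • allOnes) =
      α • 1 + (fromBlocks allOnes 0 0 allOnes : Matrix (m ⊕ n) (Fin 1 ⊕ Fin 1) R) *
        (fromBlocks (β • allOnes) (γ • allOnes) (γ • allOnes) (β • allOnes) :
          Matrix (Fin 1 ⊕ Fin 1) (m ⊕ n) R) := by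
  rw [fromBlocks_multiply, ← fromBlocks_one, fromBlocks_smul, fromBlocks_add]
  simp [allOnes_mul_allOnes]

theorem det_two_block_circulant (K : Type*) [Field K] (a b : ℕ) (ha : 1 ≤ a) (hb : 1 ≤ b)
    (α β γ : K) :
    (Matrix.fromBlocks
        (α • (1 : Matrix (Fin a) (Fin a) K) + β • allOnes) (γ • allOnes)
        (γ • allOnes) (α • (1 : Matrix (Fin b) (Fin b) K) + β • allOnes)).det =
      α ^ (a + b - 2) *
        (α ^ 2 + (a + b : K) * α * β + (a : K) * b * β ^ 2 - (a : K) * b * γ ^ 2) := by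
  rw [fromBlocks_allOnes_eq_smul_one_add_mul,
    det_smul_one_add_mul_comm_of_le _ _ (by simp; omega)]
  congr 1
  · simp
  · rw [fromBlocks_multiply, ← fromBlocks_one, fromBlocks_smul, fromBlocks_add,
      det_fromBlocks_fin_one]
    simp only [smul_mul, allOnes_mul_allOnes, Fintype.card_fin, Matrix.mul_zero, add_zero,
      Matrix.add_apply, Matrix.smul_apply, one_apply_eq, smul_eq_mul, mul_one, allOnes_apply,
      zero_add, smul_zero, Matrix.zero_apply]
    ring
end

section
/- Let $A$ be an EW tournament matrix of order $4t+1$ with parameter $a$ (as in the defining equations), and assume $\det(A) = t^{2t}(4t-1)$. Then $a^2 - (2t+1)a + t(t-1) = 0$. -/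
/-!
With `n = 4t + 1`, the hypothesis on `A * Aᵀ` says it equals `t • 1 + U * W * Uᵀ`, where `U` is the
`n × 4` block-incidence matrix and `W` the `4 × 4` matrix of block values. Sylvester's determinant
identity reduces `det (A * Aᵀ) = det A ^ 2` to a `4 × 4` determinant:
`t ^ 4 * det A ^ 2 = t ^ n * det (t • 1 + W * Uᵀ * U)`, with `Uᵀ * U` the diagonal matrix of block
sizes `t, t, a, 2t + 1 - a`. The right side expands to
`t ^ n * (t ^ 3 * (4t - 1) ^ 2 - t ^ 2 * (4t - 3) * q)` with `q = a ^ 2 - (2t + 1) * a + t * (t - 1)`,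
so `det A = t ^ (2t) * (4t - 1)` forces `q = 0`.
-/

open Matrix

namespace Matrix

variable {R ι κ : Type*} [CommRing R] [Fintype ι] [DecidableEq ι] [Fintype κ] [DecidableEq κ]

theorem pow_card_mul_det_scalar_sub_mul_comm (c : R) (U : Matrix ι κ R) (V : Matrix κ ι R) :
    c ^ Fintype.card κ * (scalar ι c - U * V).det =
      c ^ Fintype.card ι * (scalar κ c - V * U).det := by
  simpa only [Polynomial.eval_mul, Polynomial.eval_pow, Polynomial.eval_X, eval_charpoly] using
    congrArg (Polynomial.eval c) (charpoly_mul_comm' U V)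

theorem pow_card_mul_det_scalar_add_submatrix (c : R) (β : ι → κ) (W : Matrix κ κ R) :
    c ^ Fintype.card κ * (scalar ι c + W.submatrix β β).det =
      c ^ Fintype.card ι *
        (scalar κ c + W * diagonal fun k => ((Finset.univ.filter (β · = k)).card : R)).det := by
  let U : Matrix ι κ R := of fun x k => if β x = k then 1 else 0
  have hUWU : scalar ι c + W.submatrix β β = scalar ι c - (-U) * (W * Uᵀ) := by
    ext x y
    simp [U, mul_apply, sub_eq_add_neg]
  have hUU : Uᵀ * U = diagonal fun k => ((Finset.univ.filter (β · = k)).card : R) := by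
    ext k l
    by_cases hkl : k = l
    · subst hkl
      simp [U, mul_apply, ← ite_and, Finset.sum_boole]
    · rw [diagonal_apply_ne _ hkl, mul_apply]
      refine Finset.sum_eq_zero fun x _ => ?_
      by_cases hx : β x = k <;> simp [U, hx, hkl]
  rw [hUWU, pow_card_mul_det_scalar_sub_mul_comm, Matrix.mul_neg,
    sub_neg_eq_add, Matrix.mul_assoc, hUU]

end Matrix

def ewBlock {α β γ δ : Type*} : (α ⊕ β) ⊕ (γ ⊕ δ) → Fin 4 :=
  Sum.elim (Sum.elim (fun _ => 0) (fun _ => 1)) (Sum.elim (fun _ => 2) (fun _ => 3))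

def ewGram (t : ℤ) : Matrix (Fin 4) (Fin 4) ℤ :=
  !![t - 1, t - 1, t - 1, t - 1;
     t - 1, t + 1, t,     t;
     t - 1, t,     t,     t - 1;
     t - 1, t,     t - 1, t]

section Blocks

variable {α β γ δ : Type*} [Fintype α] [Fintype β] [Fintype γ] [Fintype δ]

theorem card_filter_ewBlock_eq {R : Type*} [AddCommMonoidWithOne R] :
    (fun k => ((Finset.univ.filter (ewBlock (α := α) (β := β) (γ := γ) (δ := δ) · = k)).card : R)) =
      ![(Fintype.card α : R), Fintype.card β, Fintype.card γ, Fintype.card δ] := by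
  funext k
  rw [Finset.card_filter]
  fin_cases k <;> simp [ewBlock, Fintype.sum_sum_type]

variable [DecidableEq α] [DecidableEq β] [DecidableEq γ] [DecidableEq δ]

theorem smul_one_add_allOnes_add_fromBlocks_eq (t : ℤ) :
    t • (1 + allOnes) +
      fromBlocks
        (fromBlocks (-allOnes) (-allOnes) (-allOnes) allOnes)
        (fromBlocks (-allOnes) (-allOnes) 0 0)
        (fromBlocks (-allOnes) 0 (-allOnes) 0)
        (fromBlocks 0 (-allOnes) (-allOnes) 0) =
      scalar ((α ⊕ β) ⊕ (γ ⊕ δ)) t + (ewGram t).submatrix ewBlock ewBlock := by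
  ext (((x | x) | (x | x))) (((y | y) | (y | y))) <;>
    simp [ewBlock, ewGram, allOnes] <;> ring

end Blocks

theorem det_scalar_add_ewGram_mul_diagonal (t a : ℤ) :
    (scalar (Fin 4) t + ewGram t * diagonal ![t, t, a, 2 * t + 1 - a]).det =
      t ^ 3 * (4 * t - 1) ^ 2 - t ^ 2 * (4 * t - 3) * (a ^ 2 - (2 * t + 1) * a + t * (t - 1)) := by
  generalize hb : 2 * t + 1 - a = b
  have hM : scalar (Fin 4) t + ewGram t * diagonal ![t, t, a, b] =
      !![t + (t - 1) * t, (t - 1) * t, (t - 1) * a, (t - 1) * b;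
         (t - 1) * t, t + (t + 1) * t, t * a, t * b;
         (t - 1) * t, t * t, t + t * a, (t - 1) * b;
         (t - 1) * t, t * t, (t - 1) * a, t + t * b] := by
    ext i j
    fin_cases i <;> fin_cases j <;> simp [ewGram, vecMul_diagonal, Matrix.intCast_apply]
  rw [hM, det_succ_row_zero]
  simp [Fin.sum_univ_succ, det_fin_three, Fin.succAbove]
  subst hb
  ring

theorem ew_tournament_parameter_quadratic_general (t a : ℕ) (ht : 1 ≤ t) (ha : a ≤ 2 * t + 1)
    (A : Matrix ((Fin t ⊕ Fin t) ⊕ (Fin a ⊕ Fin (2 * t + 1 - a)))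
                ((Fin t ⊕ Fin t) ⊕ (Fin a ⊕ Fin (2 * t + 1 - a))) ℤ)
    (hAAt : A * Aᵀ = (t : ℤ) • (1 + allOnes) +
      Matrix.fromBlocks
        (Matrix.fromBlocks (-allOnes) (-allOnes) (-allOnes) allOnes)
        (Matrix.fromBlocks (-allOnes) (-allOnes) 0 0)
        (Matrix.fromBlocks (-allOnes) 0 (-allOnes) 0)
        (Matrix.fromBlocks 0 (-allOnes) (-allOnes) 0))
    (hdet : A.det = (t : ℤ) ^ (2 * t) * (4 * t - 1)) :
    (a : ℤ) ^ 2 - (2 * t + 1) * a + t * (t - 1) = 0 := by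
  have hcard : Fintype.card ((Fin t ⊕ Fin t) ⊕ (Fin a ⊕ Fin (2 * t + 1 - a))) = 4 * t + 1 := by
    simp only [Fintype.card_sum, Fintype.card_fin]
    omega
  have key := pow_card_mul_det_scalar_add_submatrix (t : ℤ)
    (ewBlock : (Fin t ⊕ Fin t) ⊕ (Fin a ⊕ Fin (2 * t + 1 - a)) → Fin 4) (ewGram t)
  rw [← smul_one_add_allOnes_add_fromBlocks_eq, ← hAAt, det_mul, det_transpose, hdet,
    card_filter_ewBlock_eq, hcard] at key
  simp only [Fintype.card_fin, Nat.cast_sub ha] at key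
  push_cast at key
  rw [det_scalar_add_ewGram_mul_diagonal] at key
  have hq : (t : ℤ) ^ (4 * t + 3) * (4 * t - 3) *
      ((a : ℤ) ^ 2 - (2 * t + 1) * a + t * (t - 1)) = 0 := by
    linear_combination key
  have ht0 : (t : ℤ) ≠ 0 := by positivity
  have ht3 : (4 * t - 3 : ℤ) ≠ 0 := by omega
  exact (mul_eq_zero.mp hq).resolve_left (mul_ne_zero (pow_ne_zero _ ht0) ht3)

theorem ew_tournament_parameter_quadratic (t a : ℕ) (ht : 1 ≤ t) (ha : a ≤ 2 * t + 1)
    (A : Matrix ((Fin t ⊕ Fin t) ⊕ (Fin a ⊕ Fin (2 * t + 1 - a)))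
                ((Fin t ⊕ Fin t) ⊕ (Fin a ⊕ Fin (2 * t + 1 - a))) ℤ)
    (h01 : ∀ i j, A i j = 0 ∨ A i j = 1)
    (htour : A + Aᵀ = allOnes - 1)
    (hAAt : A * Aᵀ = (t : ℤ) • (1 + allOnes) +
      Matrix.fromBlocks
        (Matrix.fromBlocks (-allOnes) (-allOnes) (-allOnes) allOnes)
        (Matrix.fromBlocks (-allOnes) (-allOnes) 0 0)
        (Matrix.fromBlocks (-allOnes) 0 (-allOnes) 0)
        (Matrix.fromBlocks 0 (-allOnes) (-allOnes) 0))
    (hAtA : Aᵀ * A = (t : ℤ) • (1 + allOnes) +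
      Matrix.fromBlocks
        (Matrix.fromBlocks allOnes (-allOnes) (-allOnes) (-allOnes))
        (Matrix.fromBlocks 0 0 (-allOnes) (-allOnes))
        (Matrix.fromBlocks 0 (-allOnes) 0 (-allOnes))
        (Matrix.fromBlocks allOnes 0 0 (-allOnes)))
    (hdet : A.det = (t : ℤ) ^ (2 * t) * (4 * t - 1)) :
    (a : ℤ) ^ 2 - (2 * t + 1) * a + t * (t - 1) = 0 :=
  ew_tournament_parameter_quadratic_general t a ht ha A hAAt hdet
end

section
/- Let $A$ be an EW tournament matrix of order $4t+1$ with parameter $a$, and let $p$ be a prime dividing $t$. Then the rank of $A + I$ over $\mathbb{F}_p$ is at least $2t+1$. -/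
/-!
Write `B` for `A + I` over `𝔽_p`. The tournament condition gives `B + Bᵀ = I + J`, and since the
column space of `B + Bᵀ` lies in `col B + col Bᵀ`, we get
`rank (I + J) + dim (col B ∩ col Bᵀ) ≤ 2 rank B`.
For odd `p`, `I + J` is invertible because `(I + J)(I - J/(4t+2)) = I` and `4t + 2 ≡ 2`, so
`2 rank B ≥ 4t + 1`. For `p = 2` only `rank (I + J) ≥ 4t` holds (as `rank J = 1`), but `t` is even,
so the two Gram identities reduce mod 2 to their block parts; these share a nonzero column, the
indicator of the last two blocks, which therefore lies in both `col (B Bᵀ) ⊆ col B` and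
`col (Bᵀ B) ⊆ col Bᵀ`.
-/

open Matrix

open Module

namespace Matrix

section Rank

variable {K : Type*} [Field K] {m n : Type*} [Fintype n]

theorem rank_add_add_finrank_range_inf_le (A B : Matrix m n K) :
    (A + B).rank + finrank K ↥(LinearMap.range A.mulVecLin ⊓ LinearMap.range B.mulVecLin) ≤
      A.rank + B.rank := by
  have hsup : LinearMap.range (A + B).mulVecLin ≤
      LinearMap.range A.mulVecLin ⊔ LinearMap.range B.mulVecLin := by
    rintro _ ⟨x, rfl⟩
    rw [mulVecLin_add]
    exact Submodule.add_mem_sup ⟨x, rfl⟩ ⟨x, rfl⟩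
  have := Submodule.finrank_sup_add_finrank_inf_eq
    (LinearMap.range A.mulVecLin) (LinearMap.range B.mulVecLin)
  have := Submodule.finrank_mono hsup
  unfold rank
  omega

theorem rank_add_add_one_le_of_mem_range_inf {A B : Matrix m n K} {v : m → K} (hv : v ≠ 0)
    (hA : v ∈ LinearMap.range A.mulVecLin) (hB : v ∈ LinearMap.range B.mulVecLin) :
    (A + B).rank + 1 ≤ A.rank + B.rank := by
  have := rank_add_add_finrank_range_inf_le A B
  have := Submodule.one_le_finrank_iff.mpr
    ((Submodule.ne_bot_iff _).mpr ⟨v, Submodule.mem_inf.mpr ⟨hA, hB⟩, hv⟩)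
  omega

theorem col_mul_mem_range_mulVecLin {o : Type*} (A : Matrix m n K) (B : Matrix n o K) (j : o) :
    (A * B).col j ∈ LinearMap.range A.mulVecLin :=
  ⟨B.col j, rfl⟩

end Rank

section AllOnes

variable {K : Type*} [Field K] {n : Type*} [Fintype n]

theorem allOnes_mul_allOnes :
    (allOnes : Matrix n n K) * allOnes = (Fintype.card n : K) • allOnes := by
  ext i j
  simp [allOnes, mul_apply]

variable [DecidableEq n]

theorem card_le_rank_one_add_allOnes_add_one :
    Fintype.card n ≤ ((1 : Matrix n n K) + allOnes).rank + 1 := by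
  have hJ : -(allOnes : Matrix n n K) = vecMulVec (fun _ => -1) (fun _ => 1) := by
    ext i j
    simp [allOnes, vecMulVec]
  have := rank_add_add_finrank_range_inf_le ((1 : Matrix n n K) + allOnes) (-allOnes)
  have := rank_vecMulVec_le (R := K) (fun _ : n => -1) (fun _ : n => 1)
  rw [add_neg_cancel_right, rank_one, hJ] at *
  omega

theorem rank_one_add_allOnes_of_ne_zero (h : 1 + (Fintype.card n : K) ≠ 0) :
    ((1 : Matrix n n K) + allOnes).rank = Fintype.card n := by
  refine rank_of_isUnit _
    (IsUnit.of_mul_eq_one (1 - (1 + (Fintype.card n : K))⁻¹ • allOnes) ?_)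
  have hJ : (1 + allOnes) * allOnes = (1 + Fintype.card n : K) • (allOnes : Matrix n n K) := by
    rw [add_mul, one_mul, allOnes_mul_allOnes, add_smul, one_smul]
  rw [mul_sub, mul_one, mul_smul_comm, hJ, smul_smul, inv_mul_cancel₀ h, one_smul,
    add_sub_cancel_right]

end AllOnes

theorem map_intCast_mul_eq_of_dvd {p t : ℕ} (hpt : p ∣ t) {n : Type*} [Fintype n]
    {X Y C G : Matrix n n ℤ} (hXY : X * Y = (t : ℤ) • C + G) :
    X.map (Int.cast : ℤ → ZMod p) * Y.map Int.cast = G.map Int.cast := by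
  have ht : (t : ZMod p) = 0 := (ZMod.natCast_eq_zero_iff t p).mpr hpt
  calc X.map (Int.castRingHom (ZMod p)) * Y.map (Int.castRingHom (ZMod p))
      _ = (X * Y).map (Int.castRingHom (ZMod p)) := Matrix.map_mul.symm
      _ = G.map Int.cast := by ext i j; simp [hXY, ht]


theorem add_one_map_add_transpose_of_tournament {R : Type*} [Ring R] {n : Type*}
    [DecidableEq n] {A : Matrix n n ℤ} (htour : A + Aᵀ = allOnes - 1) :
    (A + 1).map (Int.cast : ℤ → R) + ((A + 1).map Int.cast)ᵀ = 1 + allOnes := by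
  have hZ : (A + 1) + (A + 1)ᵀ = 1 + allOnes := by
    rw [transpose_add, transpose_one, add_add_add_comm, htour]
    abel
  rw [← transpose_map, ← Matrix.map_add _ Int.cast_add, hZ]
  ext i j
  simp [allOnes, one_apply]

end Matrix

abbrev EWIndex (t a : ℕ) : Type := (Fin t ⊕ Fin t) ⊕ (Fin a ⊕ Fin (2 * t + 1 - a))

theorem EWIndex.card_eq {t a : ℕ} (ha : a ≤ 2 * t + 1) :
    Fintype.card (EWIndex t a) = 4 * t + 1 := by
  simp only [Fintype.card_sum, Fintype.card_fin]
  omega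

def ewRowGram (t a : ℕ) : Matrix (EWIndex t a) (EWIndex t a) ℤ :=
  fromBlocks
    (fromBlocks 0 0 0 (2 • allOnes))
    (fromBlocks 0 0 allOnes allOnes)
    (fromBlocks 0 allOnes 0 allOnes)
    (fromBlocks allOnes 0 0 allOnes)

def ewColGram (t a : ℕ) : Matrix (EWIndex t a) (EWIndex t a) ℤ :=
  fromBlocks
    (fromBlocks (2 • allOnes) 0 0 0)
    (fromBlocks allOnes allOnes 0 0)
    (fromBlocks allOnes 0 allOnes 0)
    (fromBlocks (2 • allOnes) allOnes allOnes 0)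

def ewTailIndicator (t a : ℕ) : EWIndex t a → ZMod 2 := Sum.elim 0 1

theorem ewTailIndicator_ne_zero (t a : ℕ) : ewTailIndicator t a ≠ 0 := by
  obtain ⟨i⟩ : Nonempty (Fin a ⊕ Fin (2 * t + 1 - a)) := by
    rw [← Fintype.card_pos_iff, Fintype.card_sum, Fintype.card_fin, Fintype.card_fin]
    omega
  exact fun h => one_ne_zero (congrFun h (Sum.inr i))

theorem col_map_ewRowGram {t : ℕ} (a : ℕ) (j : Fin t) :
    ((ewRowGram t a).map (Int.cast : ℤ → ZMod 2)).col (Sum.inl (Sum.inr j)) =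
      ewTailIndicator t a := by
  funext i
  rcases i with (i | i) | (i | i) <;> simp [ewRowGram, ewTailIndicator, allOnes,
    show (2 : ZMod 2) = 0 from rfl]

theorem col_map_ewColGram {t : ℕ} (a : ℕ) (j : Fin t) :
    ((ewColGram t a).map (Int.cast : ℤ → ZMod 2)).col (Sum.inl (Sum.inl j)) =
      ewTailIndicator t a := by
  funext i
  rcases i with (i | i) | (i | i) <;> simp [ewColGram, ewTailIndicator, allOnes,
    show (2 : ZMod 2) = 0 from rfl]

theorem ew_tournament_rank_lower_bound_general (t a p : ℕ) (ht : 1 ≤ t) (ha : a ≤ 2 * t + 1)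
    (hp : p.Prime) (hpt : p ∣ t)
    (A : Matrix ((Fin t ⊕ Fin t) ⊕ (Fin a ⊕ Fin (2 * t + 1 - a)))
                ((Fin t ⊕ Fin t) ⊕ (Fin a ⊕ Fin (2 * t + 1 - a))) ℤ)
    (htour : A + Aᵀ = allOnes - 1)
    (hAAt : (A + 1) * (Aᵀ + 1) = (t : ℤ) • (1 + allOnes) +
      Matrix.fromBlocks
        (Matrix.fromBlocks 0 0 0 (2 • allOnes))
        (Matrix.fromBlocks 0 0 allOnes allOnes)
        (Matrix.fromBlocks 0 allOnes 0 allOnes)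
        (Matrix.fromBlocks allOnes 0 0 allOnes))
    (hAtA : (Aᵀ + 1) * (A + 1) = (t : ℤ) • (1 + allOnes) +
      Matrix.fromBlocks
        (Matrix.fromBlocks (2 • allOnes) 0 0 0)
        (Matrix.fromBlocks allOnes allOnes 0 0)
        (Matrix.fromBlocks allOnes 0 allOnes 0)
        (Matrix.fromBlocks (2 • allOnes) allOnes allOnes 0)) :
    2 * t + 1 ≤ ((A + 1).map (Int.cast : ℤ → ZMod p)).rank := by
  have : Fact p.Prime := ⟨hp⟩
  set B := (A + 1).map (Int.cast : ℤ → ZMod p)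
  have hBt : Bᵀ = (Aᵀ + 1).map Int.cast := by
    rw [← transpose_map, transpose_add, transpose_one]
  have hsym := add_one_map_add_transpose_of_tournament (R := ZMod p) htour
  have hcard := EWIndex.card_eq ha
  rcases hp.eq_two_or_odd with rfl | hodd
  · have hrow : B * Bᵀ = (ewRowGram t a).map Int.cast := by
      rw [hBt]; exact map_intCast_mul_eq_of_dvd hpt hAAt
    have hcol : Bᵀ * B = (ewColGram t a).map Int.cast := by
      rw [hBt]; exact map_intCast_mul_eq_of_dvd hpt hAtA
    have hleft : ewTailIndicator t a ∈ LinearMap.range B.mulVecLin := by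
      rw [← col_map_ewRowGram a ⟨0, ht⟩, ← hrow]
      exact col_mul_mem_range_mulVecLin B Bᵀ _
    have hright : ewTailIndicator t a ∈ LinearMap.range Bᵀ.mulVecLin := by
      rw [← col_map_ewColGram a ⟨0, ht⟩, ← hcol]
      exact col_mul_mem_range_mulVecLin Bᵀ B _
    have key := rank_add_add_one_le_of_mem_range_inf (ewTailIndicator_ne_zero t a) hleft hright
    have := card_le_rank_one_add_allOnes_add_one (K := ZMod 2) (n := EWIndex t a)
    rw [rank_transpose, hsym] at key
    omega
  · have h2 : (2 : ZMod p) ≠ 0 := by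
      intro h
      have := Nat.le_of_dvd two_pos ((ZMod.natCast_eq_zero_iff 2 p).mp (by exact_mod_cast h))
      have := hp.two_le
      omega
    have hunit : 1 + (Fintype.card (EWIndex t a) : ZMod p) ≠ 0 := by
      rw [hcard, Nat.cast_add, Nat.cast_mul, (ZMod.natCast_eq_zero_iff t p).mpr hpt]
      simpa [one_add_one_eq_two] using h2
    have := rank_one_add_allOnes_of_ne_zero hunit
    have key := rank_add_add_finrank_range_inf_le B Bᵀ
    rw [rank_transpose, hsym] at key
    omega

theorem ew_tournament_rank_lower_bound (t a p : ℕ) (ht : 1 ≤ t) (ha : a ≤ 2 * t + 1)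
    (hp : p.Prime) (hpt : p ∣ t)
    (A : Matrix ((Fin t ⊕ Fin t) ⊕ (Fin a ⊕ Fin (2 * t + 1 - a)))
                ((Fin t ⊕ Fin t) ⊕ (Fin a ⊕ Fin (2 * t + 1 - a))) ℤ)
    (h01 : ∀ i j, A i j = 0 ∨ A i j = 1)
    (htour : A + Aᵀ = allOnes - 1)
    (hAAt : (A + 1) * (Aᵀ + 1) = (t : ℤ) • (1 + allOnes) +
      Matrix.fromBlocks
        (Matrix.fromBlocks 0 0 0 (2 • allOnes))
        (Matrix.fromBlocks 0 0 allOnes allOnes)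
        (Matrix.fromBlocks 0 allOnes 0 allOnes)
        (Matrix.fromBlocks allOnes 0 0 allOnes))
    (hAtA : (Aᵀ + 1) * (A + 1) = (t : ℤ) • (1 + allOnes) +
      Matrix.fromBlocks
        (Matrix.fromBlocks (2 • allOnes) 0 0 0)
        (Matrix.fromBlocks allOnes allOnes 0 0)
        (Matrix.fromBlocks allOnes 0 allOnes 0)
        (Matrix.fromBlocks (2 • allOnes) allOnes allOnes 0)) :
    2 * t + 1 ≤ ((A + 1).map (Int.cast : ℤ → ZMod p)).rank :=
  ew_tournament_rank_lower_bound_general t a p ht ha hp hpt A htour hAAt hAtA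
end

section
/- Let $t \ge 1$ and let $s_1 \mid s_2 \mid \cdots \mid s_{4t+2}$ be positive integers with $s_1 = 1$, $s_2 = \cdots = s_{2t+2} = 2$, $s_{4t+2} = 2t(4t+1)$, and $\prod_{i=1}^{4t+2} s_i = 2^{2t+1}(2t)^{2t}(4t+1)$. Then $s_{2t+3} = s_{2t+4} = \cdots = s_{4t+1} = 2t$. -/
theorem middle_invariant_factors (t : ℕ) (ht : 1 ≤ t) (s : ℕ → ℕ)
    (hpos : ∀ i, 1 ≤ i → i ≤ 4 * t + 2 → 0 < s i)
    (hdvd : ∀ i, 1 ≤ i → i ≤ 4 * t + 1 → s i ∣ s (i + 1))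
    (h1 : s 1 = 1)
    (h2 : ∀ i, 2 ≤ i → i ≤ 2 * t + 2 → s i = 2)
    (hlast : s (4 * t + 2) = 2 * t * (4 * t + 1))
    (hprod : ∏ i ∈ Finset.Icc 1 (4 * t + 2), s i = 2 * (4 * t + 1) * (4 * t) ^ (2 * t)) :
    ∀ i, 2 * t + 3 ≤ i → i ≤ 4 * t + 1 → s i = 2 * t := by
  -- chain divisibility
  have hchain : ∀ j, j ≤ 4 * t + 2 → ∀ i, 1 ≤ i → i ≤ j → s i ∣ s j := by
    intro j
    induction j with
    | zero => intro _ i hi hij; omega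
    | succ n ih =>
      intro hn i hi hij
      rcases Nat.eq_or_lt_of_le hij with h | h
      · subst h; exact dvd_rfl
      · have : i ≤ n := by omega
        exact (ih (by omega) i hi this).trans (hdvd n (by omega) (by omega))
  -- product of first block
  have hfirst : ∏ i ∈ Finset.Icc 1 (2 * t + 2), s i = 2 ^ (2 * t + 1) := by
    have : Finset.Icc 1 (2 * t + 2) = insert 1 (Finset.Icc 2 (2 * t + 2)) := by
      ext x; simp [Finset.mem_Icc, Finset.mem_insert]; omega
    rw [this, Finset.prod_insert (by simp [Finset.mem_Icc])]
    rw [h1, one_mul]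
    rw [Finset.prod_congr rfl (fun x hx => by
      simp only [Finset.mem_Icc] at hx; exact h2 x hx.1 hx.2)]
    rw [Finset.prod_const, Nat.card_Icc]
    congr 1
  -- split the full product
  set P := ∏ i ∈ Finset.Icc (2 * t + 3) (4 * t + 1), s i with hP
  have hsplit : (∏ i ∈ Finset.Icc 1 (4 * t + 2), s i)
      = 2 ^ (2 * t + 1) * (P * s (4 * t + 2)) := by
    have e1 : Finset.Icc 1 (4 * t + 2) = Finset.Ioc 0 (4 * t + 2) := by
      ext x; simp [Finset.mem_Icc, Finset.mem_Ioc]; omega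
    have e2 : Finset.Icc 1 (2 * t + 2) = Finset.Ioc 0 (2 * t + 2) := by
      ext x; simp [Finset.mem_Icc, Finset.mem_Ioc]; omega
    have e3 : Finset.Ioc (2 * t + 2) (4 * t + 2) = Finset.Icc (2 * t + 3) (4 * t + 2) := by
      ext x; simp [Finset.mem_Icc, Finset.mem_Ioc]; omega
    rw [e1, ← Finset.prod_Ioc_consecutive s (by omega : 0 ≤ 2 * t + 2) (by omega : 2 * t + 2 ≤ 4 * t + 2),
      ← e2, hfirst, e3]
    have : (4 : ℕ) * t + 2 = (4 * t + 1) + 1 := by omega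
    rw [this, Finset.prod_Icc_succ_top (by omega : 2 * t + 3 ≤ 4 * t + 1 + 1) s]
  -- compute P
  have hPval : P = (2 * t) ^ (2 * t - 1) := by
    have h4t : (4 * t) ^ (2 * t) = 2 ^ (2 * t) * (2 * t) ^ (2 * t) := by
      rw [show (4 : ℕ) * t = 2 * (2 * t) by ring, mul_pow]
    have hexp : (2 * t) ^ (2 * t) = (2 * t) ^ (2 * t - 1) * (2 * t) := by
      rw [← pow_succ]; congr 1; omega
    have key := hprod
    rw [hsplit, hlast, h4t, hexp] at key
    have key2 : 2 ^ (2 * t + 1) * (P * (2 * t * (4 * t + 1)))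
        = 2 ^ (2 * t + 1) * ((2 * t) ^ (2 * t - 1) * (2 * t * (4 * t + 1))) := by
      rw [key]; ring
    have := Nat.eq_of_mul_eq_mul_left (by positivity) key2
    have h2t : 0 < 2 * t * (4 * t + 1) := by positivity
    exact Nat.eq_of_mul_eq_mul_right h2t this
  -- coprimality
  have hcop : Nat.Coprime (2 * t) (4 * t + 1) := by
    have := (Nat.coprime_add_mul_left_right (2 * t) 1 2).mpr (Nat.coprime_one_right (2 * t))
    rwa [show 1 + 2 * t * 2 = 4 * t + 1 by ring] at this
  -- each middle term divides 2t
  have hdvd2t : ∀ i ∈ Finset.Icc (2 * t + 3) (4 * t + 1), s i ∣ 2 * t := by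
    intro i hi
    simp only [Finset.mem_Icc] at hi
    have hdP : s i ∣ P := Finset.dvd_prod_of_mem s (by simp [Finset.mem_Icc]; omega)
    rw [hPval] at hdP
    have hcop' : Nat.Coprime (s i) (4 * t + 1) :=
      Nat.Coprime.coprime_dvd_left hdP (hcop.pow_left _)
    have hdlast : s i ∣ 2 * t * (4 * t + 1) := by
      rw [← hlast]; exact hchain (4 * t + 2) le_rfl i (by omega) (by omega)
    exact hcop'.dvd_of_dvd_mul_right hdlast
  -- conclude each is exactly 2t
  intro i hi1 hi2
  by_contra hne
  have himem : i ∈ Finset.Icc (2 * t + 3) (4 * t + 1) := by simp [Finset.mem_Icc]; omega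
  have hlt : P < ∏ _j ∈ Finset.Icc (2 * t + 3) (4 * t + 1), (2 * t) := by
    apply Finset.prod_lt_prod
    · intro j hj; simp only [Finset.mem_Icc] at hj; exact hpos j (by omega) (by omega)
    · intro j hj; exact Nat.le_of_dvd (by omega) (hdvd2t j hj)
    · exact ⟨i, himem, lt_of_le_of_ne (Nat.le_of_dvd (by omega) (hdvd2t i himem)) hne⟩
  rw [Finset.prod_const, Nat.card_Icc, hPval] at hlt
  have : 4 * t + 1 + 1 - (2 * t + 3) = 2 * t - 1 := by omega
  rw [this] at hlt
  exact lt_irrefl _ hlt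
end

section
/- Let $t \ge 1$ and let $a_1 \mid a_2 \mid \cdots \mid a_{4t+1}$ be positive integers with $a_1 = \cdots = a_{2t+2} = 1$, $a_{4t} \mid t$, $a_{4t+1} \mid t^2(4t-1)$, and $\prod_{i=1}^{4t+1} a_i = t^{2t}(4t-1)$. Then $a_{2t+3} = \cdots = a_{4t} = t$ and $a_{4t+1} = t^2(4t-1)$. -/
/-!
Every `a i` with `2t + 2 < i ≤ 4t` divides `a (4t)`, hence `t`, so `a i ≤ t`; likewise
`a (4t + 1) ≤ t²(4t - 1)`.
Since the first `2t + 2` factors are `1`, the product of these bounds is exactly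
`t^(2t-2) · t²(4t - 1) = ∏ a i`, which forces every bound to be attained.
-/

open Finset

theorem dvd_of_forall_dvd_succ {α : Type*} [Monoid α] {a : ℕ → α} {m n : ℕ}
    (h : ∀ i, m ≤ i → i < n → a i ∣ a (i + 1)) {i : ℕ} (hmi : m ≤ i) (hin : i ≤ n) :
    a i ∣ a n := by
  induction n, hin using Nat.le_induction with
  | base => rfl
  | succ n hin ih =>
    exact (ih fun j hmj hjn => h j hmj (by omega)).trans (h n (hmi.trans hin) (by omega))

theorem Finset.eq_of_le_of_prod_eq {ι R : Type*} [CommMonoidWithZero R] [PartialOrder R]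
    [ZeroLEOneClass R] [PosMulStrictMono R] [Nontrivial R] {s : Finset ι} {f g : ι → R}
    (hf : ∀ i ∈ s, 0 < f i) (hfg : ∀ i ∈ s, f i ≤ g i)
    (h : ∏ i ∈ s, f i = ∏ i ∈ s, g i) : ∀ i ∈ s, f i = g i := by
  by_contra! ⟨i, hi, hne⟩
  exact (prod_lt_prod hf hfg ⟨i, hi, (hfg i hi).lt_of_ne hne⟩).ne h

theorem tournament_invariant_factors_general (t : ℕ) (ht : 1 ≤ t) (a : ℕ → ℕ)
    (hdvd : ∀ i, 1 ≤ i → i ≤ 4 * t → a i ∣ a (i + 1))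
    (h1 : ∀ i, 1 ≤ i → i ≤ 2 * t + 2 → a i = 1)
    (h4t : a (4 * t) ∣ t)
    (h4t1 : a (4 * t + 1) ∣ t ^ 2 * (4 * t - 1))
    (hprod : ∏ i ∈ Finset.Icc 1 (4 * t + 1), a i = t ^ (2 * t) * (4 * t - 1)) :
    (∀ i, 2 * t + 3 ≤ i → i ≤ 4 * t → a i = t) ∧ a (4 * t + 1) = t ^ 2 * (4 * t - 1) := by
  have hlast_pos : 0 < t ^ 2 * (4 * t - 1) := Nat.mul_pos (by positivity) (by omega)
  have hmid_dvd : ∀ i ∈ Ioc (2 * t + 2) (4 * t), a i ∣ t := fun i hi =>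
    (dvd_of_forall_dvd_succ (fun j hj hjt => hdvd j hj hjt.le) (by have := mem_Ioc.1 hi; omega)
      (mem_Ioc.1 hi).2).trans h4t
  have hmid_pos : ∀ i ∈ Ioc (2 * t + 2) (4 * t), 0 < a i := fun i hi =>
    Nat.pos_of_dvd_of_pos (hmid_dvd i hi) ht
  have hmid_le : ∀ i ∈ Ioc (2 * t + 2) (4 * t), a i ≤ t := fun i hi =>
    Nat.le_of_dvd ht (hmid_dvd i hi)
  have htail : (∏ i ∈ Ioc (2 * t + 2) (4 * t), a i) * a (4 * t + 1) =
      (∏ _i ∈ Ioc (2 * t + 2) (4 * t), t) * (t ^ 2 * (4 * t - 1)) := by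
    have hsupport : ∏ i ∈ Ioc (2 * t + 2) (4 * t + 1), a i = ∏ i ∈ Icc 1 (4 * t + 1), a i :=
      prod_subset (fun i hi => by simp only [mem_Ioc, mem_Icc] at hi ⊢; omega)
        fun i hi hi' => by
          simp only [mem_Ioc, mem_Icc, not_and_or] at hi hi'
          exact h1 i (by omega) (by omega)
    rw [← prod_Ioc_succ_top (by omega), hsupport, hprod, prod_const,
      Nat.card_Ioc, ← mul_assoc, ← pow_add]
    congr 2
    omega
  obtain ⟨hmid, hlast⟩ := (mul_eq_mul_iff_eq_and_eq_of_pos (prod_le_prod' hmid_le)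
    (Nat.le_of_dvd hlast_pos h4t1) (prod_pos hmid_pos) hlast_pos).1 htail
  exact ⟨fun i hi hi' => eq_of_le_of_prod_eq hmid_pos hmid_le hmid i (mem_Ioc.2 ⟨by omega, hi'⟩),
    hlast⟩

theorem tournament_invariant_factors (t : ℕ) (ht : 1 ≤ t) (a : ℕ → ℕ)
    (hpos : ∀ i, 1 ≤ i → i ≤ 4 * t + 1 → 0 < a i)
    (hdvd : ∀ i, 1 ≤ i → i ≤ 4 * t → a i ∣ a (i + 1))
    (h1 : ∀ i, 1 ≤ i → i ≤ 2 * t + 2 → a i = 1)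
    (h4t : a (4 * t) ∣ t)
    (h4t1 : a (4 * t + 1) ∣ t ^ 2 * (4 * t - 1))
    (hprod : ∏ i ∈ Finset.Icc 1 (4 * t + 1), a i = t ^ (2 * t) * (4 * t - 1)) :
    (∀ i, 2 * t + 3 ≤ i → i ≤ 4 * t → a i = t) ∧ a (4 * t + 1) = t ^ 2 * (4 * t - 1) :=
  tournament_invariant_factors_general t ht a hdvd h1 h4t h4t1 hprod
end
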